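/- If the set of feasible plans is nonempty, then the supremum of the final capital B_T over all feasible plans is attained: there exists a feasible plan (y*, v*) with B_T(y*, v*) ≥ B_T(y, v) for every feasible plan (y, v). (The feasible set is a compact subset of ℝ^{2T} except for the non-closedness introduced by the setup indicator, and the objective B_T is upper semicontinuous, since the setup charge −s_t·[y_t > 0] is upper semicontinuous in y_t.) -/
import Mathlib


noncomputable def setupInd (x : ℝ) : ℝ := if 0 < x then 1 else 0

noncomputable def wSeq (d : ℕ → ℝ) (β : ℝ) (v : ℕ → ℝ) : ℕ → ℝ
  | 0 => 0
  | t + 1 => max 0 (d (t + 1) - β * wSeq d β v t) - v (t + 1)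

noncomputable def EdSeq (d : ℕ → ℝ) (β : ℝ) (v : ℕ → ℝ) (t : ℕ) : ℝ :=
  max 0 (d t - β * wSeq d β v (t - 1))

noncomputable def ISeq (y v : ℕ → ℝ) (m t : ℕ) : ℝ :=
  ∑ j ∈ Finset.Icc m t, (y j - v j)

noncomputable def BSeq (p h s c : ℕ → ℝ) (R : ℝ) (TL : ℕ) (y v : ℕ → ℝ)
    (m : ℕ) (Binit : ℝ) : ℕ → ℝ
  | 0 => Binit
  | t + 1 =>
    if t + 1 < m then Binit
    else
      BSeq p h s c R TL y v m Binit t + p (t + 1) * v (t + 1)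
        - h (t + 1) * ISeq y v m (t + 1)
        - s (t + 1) * setupInd (y (t + 1))
        - c (t + 1) * y (t + 1)
        - (if t + 1 = TL then R else 0)

/-- Feasibility of a full-horizon plan (periods 1..T). -/
def Feasible (T : ℕ) (d p c h s : ℕ → ℝ) (β B0 R : ℝ) (TL : ℕ)
    (y v : ℕ → ℝ) : Prop :=
  ∀ t, 1 ≤ t → t ≤ T →
    0 ≤ y t ∧ 0 ≤ v t ∧ v t ≤ EdSeq d β v t ∧
    0 ≤ ISeq y v 1 t ∧
    s t * setupInd (y t) + c t * y t ≤ BSeq p h s c R TL y v 1 B0 (t - 1) ∧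
    0 ≤ BSeq p h s c R TL y v 1 B0 t

/-- Feasibility of a plan on periods m..n, β = 0 case (sales bounded by demand),
with initial inventory 0 and initial capital `Binit`. -/
def FeasibleSeg (m n : ℕ) (d p c h s : ℕ → ℝ) (R : ℝ) (TL : ℕ) (Binit : ℝ)
    (y v : ℕ → ℝ) : Prop :=
  ∀ t, m ≤ t → t ≤ n →
    0 ≤ y t ∧ 0 ≤ v t ∧ v t ≤ d t ∧
    0 ≤ ISeq y v m t ∧
    s t * setupInd (y t) + c t * y t ≤ BSeq p h s c R TL y v m Binit (t - 1) ∧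
    0 ≤ BSeq p h s c R TL y v m Binit t

open Filter Topology


lemma setupInd_nonneg (x : ℝ) : 0 ≤ setupInd x := by
  unfold setupInd; split <;> norm_num

lemma setupInd_of_pos {x : ℝ} (hx : 0 < x) : setupInd x = 1 := if_pos hx

lemma setupInd_of_nonpos {x : ℝ} (hx : x ≤ 0) : setupInd x = 0 := if_neg (not_lt.2 hx)

lemma BSeq_succ (p h s c : ℕ → ℝ) (R : ℝ) (TL : ℕ) (y v : ℕ → ℝ) (B0 : ℝ) (t : ℕ) :
    BSeq p h s c R TL y v 1 B0 (t + 1)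
      = BSeq p h s c R TL y v 1 B0 t + p (t + 1) * v (t + 1)
        - h (t + 1) * ISeq y v 1 (t + 1)
        - s (t + 1) * setupInd (y (t + 1))
        - c (t + 1) * y (t + 1)
        - (if t + 1 = TL then R else 0) := by
  rw [BSeq, if_neg (by omega)]

/-- `BSeq` with explicit setup charge sequence `e`. -/
noncomputable def BAux (p h s c : ℕ → ℝ) (R : ℝ) (TL : ℕ) (e y v : ℕ → ℝ)
    (Binit : ℝ) : ℕ → ℝ
  | 0 => Binit
  | t + 1 =>
      BAux p h s c R TL e y v Binit t + p (t + 1) * v (t + 1)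
        - h (t + 1) * ISeq y v 1 (t + 1)
        - s (t + 1) * e (t + 1)
        - c (t + 1) * y (t + 1)
        - (if t + 1 = TL then R else 0)

lemma BSeq_eq_BAux (p h s c : ℕ → ℝ) (R : ℝ) (TL : ℕ) (y v : ℕ → ℝ) (B0 : ℝ) :
    ∀ t, BSeq p h s c R TL y v 1 B0 t
      = BAux p h s c R TL (fun j => setupInd (y j)) y v B0 t
  | 0 => rfl
  | t + 1 => by
      rw [BSeq_succ, BAux, BSeq_eq_BAux p h s c R TL y v B0 t]

lemma BAux_mono (p h s c : ℕ → ℝ) (R : ℝ) (TL : ℕ) (hs : ∀ j, 0 ≤ s j)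
    (e e' y v : ℕ → ℝ) (B0 : ℝ) (hee : ∀ j, e j ≤ e' j) :
    ∀ t, BAux p h s c R TL e' y v B0 t ≤ BAux p h s c R TL e y v B0 t
  | 0 => le_refl _
  | t + 1 => by
      have ih := BAux_mono p h s c R TL hs e e' y v B0 hee t
      have h2 : s (t+1) * e (t+1) ≤ s (t+1) * e' (t+1) :=
        mul_le_mul_of_nonneg_left (hee _) (hs _)
      rw [BAux, BAux]
      linarith

lemma wSeq_congr (d : ℕ → ℝ) (β : ℝ) (v v' : ℕ → ℝ) (n : ℕ)
    (hv : ∀ j, 1 ≤ j → j ≤ n → v j = v' j) :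
    ∀ t, t ≤ n → wSeq d β v t = wSeq d β v' t
  | 0, _ => rfl
  | t + 1, ht => by
      rw [wSeq, wSeq, wSeq_congr d β v v' n hv t (by omega), hv (t+1) (by omega) ht]

lemma ISeq_congr (y v y' v' : ℕ → ℝ) (n : ℕ)
    (hy : ∀ j, 1 ≤ j → j ≤ n → y j = y' j) (hv : ∀ j, 1 ≤ j → j ≤ n → v j = v' j)
    (t : ℕ) (ht : t ≤ n) : ISeq y v 1 t = ISeq y' v' 1 t := by
  unfold ISeq
  refine Finset.sum_congr rfl fun j hj => ?_
  rw [Finset.mem_Icc] at hj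
  rw [hy j hj.1 (le_trans hj.2 ht), hv j hj.1 (le_trans hj.2 ht)]

lemma BSeq_congr (p h s c : ℕ → ℝ) (R : ℝ) (TL : ℕ) (y v y' v' : ℕ → ℝ) (B0 : ℝ) (n : ℕ)
    (hy : ∀ j, 1 ≤ j → j ≤ n → y j = y' j) (hv : ∀ j, 1 ≤ j → j ≤ n → v j = v' j) :
    ∀ t, t ≤ n → BSeq p h s c R TL y v 1 B0 t = BSeq p h s c R TL y' v' 1 B0 t
  | 0, _ => rfl
  | t + 1, ht => by
      rw [BSeq_succ, BSeq_succ,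
        BSeq_congr p h s c R TL y v y' v' B0 n hy hv t (by omega),
        hy (t+1) (by omega) ht, hv (t+1) (by omega) ht,
        ISeq_congr y v y' v' n hy hv (t+1) ht]

lemma wSeq_tendsto (d : ℕ → ℝ) (β : ℝ) (V : ℕ → ℕ → ℝ) (v : ℕ → ℝ)
    (hv : ∀ j, Tendsto (fun n => V n j) atTop (𝓝 (v j))) :
    ∀ t, Tendsto (fun n => wSeq d β (V n) t) atTop (𝓝 (wSeq d β v t))
  | 0 => by simpa [wSeq] using (tendsto_const_nhds : Tendsto (fun _ : ℕ => (0:ℝ)) atTop _)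
  | t + 1 => by
      have ih := wSeq_tendsto d β V v hv t
      simp only [wSeq]
      exact (tendsto_const_nhds.max (tendsto_const_nhds.sub (ih.const_mul β))).sub (hv (t+1))

lemma ISeq_tendsto (Y V : ℕ → ℕ → ℝ) (y v : ℕ → ℝ)
    (hy : ∀ j, Tendsto (fun n => Y n j) atTop (𝓝 (y j)))
    (hv : ∀ j, Tendsto (fun n => V n j) atTop (𝓝 (v j))) (t : ℕ) :
    Tendsto (fun n => ISeq (Y n) (V n) 1 t) atTop (𝓝 (ISeq y v 1 t)) := by
  unfold ISeq
  exact tendsto_finset_sum _ fun j _ => (hy j).sub (hv j)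

lemma BAux_tendsto (p h s c : ℕ → ℝ) (R : ℝ) (TL : ℕ) (e : ℕ → ℝ) (B0 : ℝ)
    (Y V : ℕ → ℕ → ℝ) (y v : ℕ → ℝ)
    (hy : ∀ j, Tendsto (fun n => Y n j) atTop (𝓝 (y j)))
    (hv : ∀ j, Tendsto (fun n => V n j) atTop (𝓝 (v j))) :
    ∀ t, Tendsto (fun n => BAux p h s c R TL e (Y n) (V n) B0 t) atTop
      (𝓝 (BAux p h s c R TL e y v B0 t))
  | 0 => by simpa [BAux] using (tendsto_const_nhds : Tendsto (fun _ : ℕ => B0) atTop _)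
  | t + 1 => by
      have ih := BAux_tendsto p h s c R TL e B0 Y V y v hy hv t
      simp only [BAux]
      exact (((((ih.add ((hv (t+1)).const_mul (p (t+1)))).sub
        ((ISeq_tendsto Y V y v hy hv (t+1)).const_mul (h (t+1)))).sub
        tendsto_const_nhds).sub ((hy (t+1)).const_mul (c (t+1)))).sub tendsto_const_nhds)

section Bounds


variable {T : ℕ} {d p c h s : ℕ → ℝ} {β B0 R : ℝ} {TL : ℕ} {y v : ℕ → ℝ}
  (hc : ∀ t, 0 < c t) (hd : ∀ t, 0 ≤ d t) (hp : ∀ t, 0 ≤ p t) (hh : ∀ t, 0 ≤ h t)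
  (hs : ∀ t, 0 ≤ s t) (hβ0 : 0 ≤ β) (hB0 : 0 ≤ B0) (hR : 0 ≤ R)
  (hf : Feasible T d p c h s β B0 R TL y v)

include hf in
lemma w_nonneg : ∀ t, t ≤ T → 0 ≤ wSeq d β v t
  | 0, _ => le_refl _
  | t + 1, ht => by
      have h3 := (hf (t+1) (by omega) ht).2.2.1
      unfold EdSeq at h3
      simp only [Nat.add_sub_cancel] at h3
      rw [wSeq]
      linarith

include hd hβ0 hf in
lemma v_le_d : ∀ t, 1 ≤ t → t ≤ T → v t ≤ d t := by
  intro t h1 h2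
  have h3 := (hf t h1 h2).2.2.1
  have hw : 0 ≤ wSeq d β v (t - 1) := w_nonneg hf (t-1) (by omega)
  have : EdSeq d β v t ≤ d t := by
    unfold EdSeq
    have : d t - β * wSeq d β v (t-1) ≤ d t := by nlinarith
    exact max_le (hd t) this
  linarith

include hc hd hp hh hs hβ0 hR hf in
lemma B_le : ∀ t, t ≤ T →
    BSeq p h s c R TL y v 1 B0 t ≤ B0 + ∑ j ∈ Finset.Icc 1 t, p j * d j
  | 0, _ => by simp [BSeq]
  | t + 1, ht => by
      have ih := B_le t (by omega)
      obtain ⟨hy0, hv0, _, hI, _, _⟩ := hf (t+1) (by omega) ht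
      have hvd : v (t+1) ≤ d (t+1) := v_le_d hd hβ0 hf (t+1) (by omega) ht
      have h1 : p (t+1) * v (t+1) ≤ p (t+1) * d (t+1) :=
        mul_le_mul_of_nonneg_left hvd (hp _)
      have h2 : 0 ≤ h (t+1) * ISeq y v 1 (t+1) := mul_nonneg (hh _) hI
      have h3 : 0 ≤ s (t+1) * setupInd (y (t+1)) := mul_nonneg (hs _) (setupInd_nonneg _)
      have h4 : 0 ≤ c (t+1) * y (t+1) := mul_nonneg (hc _).le hy0
      have h5 : 0 ≤ (if t + 1 = TL then R else 0) := by split <;> simp [hR]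
      rw [BSeq_succ, Finset.sum_Icc_succ_top (by omega)]
      linarith

include hc hd hp hh hs hβ0 hR hf in
lemma B_le' (t : ℕ) (ht : t ≤ T) :
    BSeq p h s c R TL y v 1 B0 t ≤ B0 + ∑ j ∈ Finset.Icc 1 T, p j * d j := by
  refine le_trans (B_le hc hd hp hh hs hβ0 hR hf t ht) ?_
  have := Finset.sum_le_sum_of_subset_of_nonneg (f := fun j => p j * d j)
    (Finset.Icc_subset_Icc_right (a := 1) ht) (fun j _ _ => mul_nonneg (hp j) (hd j))
  linarith

include hc hd hp hh hs hβ0 hR hf in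
lemma y_le (t : ℕ) (h1 : 1 ≤ t) (h2 : t ≤ T) :
    y t ≤ (B0 + ∑ j ∈ Finset.Icc 1 T, p j * d j) / c t := by
  have h5 := (hf t h1 h2).2.2.2.2.1
  have h3 : 0 ≤ s t * setupInd (y t) := mul_nonneg (hs _) (setupInd_nonneg _)
  have h4 := B_le' hc hd hp hh hs hβ0 hR hf (t-1) (by omega)
  rw [le_div_iff₀ (hc t)]
  nlinarith [hc t]

end Bounds

/-- if a feasible plan exists, then the supremum of the final capital
over feasible plans is attained by some feasible plan. -/
theorem stmt12 (T : ℕ) (hT : 1 ≤ T) (d p c h s : ℕ → ℝ)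
    (hc : ∀ t, 0 < c t)
    (hd : ∀ t, 0 ≤ d t) (hp : ∀ t, 0 ≤ p t) (hh : ∀ t, 0 ≤ h t) (hs : ∀ t, 0 ≤ s t)
    (β : ℝ) (hβ0 : 0 ≤ β) (hβ1 : β ≤ 1)
    (B0 R : ℝ) (hB0 : 0 ≤ B0) (hR : 0 ≤ R)
    (TL : ℕ) (hTL1 : 1 ≤ TL) (hTL2 : TL ≤ T)
    (hne : ∃ y v : ℕ → ℝ, Feasible T d p c h s β B0 R TL y v) :
    ∃ ystar vstar : ℕ → ℝ,
      Feasible T d p c h s β B0 R TL ystar vstar ∧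
      ∀ y v : ℕ → ℝ, Feasible T d p c h s β B0 R TL y v →
        BSeq p h s c R TL y v 1 B0 T ≤ BSeq p h s c R TL ystar vstar 1 B0 T := by
  classical
  set M : ℝ := B0 + ∑ j ∈ Finset.Icc 1 T, p j * d j with hM
  have hM0 : 0 ≤ M := by
    have : 0 ≤ ∑ j ∈ Finset.Icc 1 T, p j * d j :=
      Finset.sum_nonneg fun j _ => mul_nonneg (hp j) (hd j)
    rw [hM]; linarith
  set Vals : Set ℝ := {r | ∃ y v, Feasible T d p c h s β B0 R TL y v ∧
    BSeq p h s c R TL y v 1 B0 T = r} with hVals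
  have hVne : Vals.Nonempty := by
    obtain ⟨y, v, hf⟩ := hne; exact ⟨_, y, v, hf, rfl⟩
  have hVbdd : BddAbove Vals := by
    refine ⟨M, ?_⟩
    rintro r ⟨y, v, hf, rfl⟩
    exact B_le' hc hd hp hh hs hβ0 hR hf T le_rfl
  set α := sSup Vals with hα
  have hsel : ∀ n : ℕ, ∃ yv : (ℕ → ℝ) × (ℕ → ℝ),
      Feasible T d p c h s β B0 R TL yv.1 yv.2 ∧
      α - 1/((n:ℝ)+1) < BSeq p h s c R TL yv.1 yv.2 1 B0 T := by
    intro n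
    have hpos : (0:ℝ) < 1/((n:ℝ)+1) := by positivity
    obtain ⟨r, hr, hlt⟩ := exists_lt_of_lt_csSup hVne
      (show α - 1/((n:ℝ)+1) < α by linarith)
    obtain ⟨y, v, hf, hre⟩ := hr
    exact ⟨(y, v), hf, by rw [hre]; exact hlt⟩
  choose YV hfeas0 hval0 using hsel
  set Y : ℕ → ℕ → ℝ := fun n t => if 1 ≤ t ∧ t ≤ T then (YV n).1 t else 0 with hY
  set V : ℕ → ℕ → ℝ := fun n t => if 1 ≤ t ∧ t ≤ T then (YV n).2 t else 0 with hV
  have hagY : ∀ n j, 1 ≤ j → j ≤ T → (YV n).1 j = Y n j := by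
    intro n j h1 h2; simp [hY, h1, h2]
  have hagV : ∀ n j, 1 ≤ j → j ≤ T → (YV n).2 j = V n j := by
    intro n j h1 h2; simp [hV, h1, h2]
  have hBeq : ∀ n t, t ≤ T → BSeq p h s c R TL (YV n).1 (YV n).2 1 B0 t
      = BSeq p h s c R TL (Y n) (V n) 1 B0 t := fun n t ht =>
    BSeq_congr p h s c R TL _ _ _ _ B0 T (hagY n) (hagV n) t ht
  have hfeas : ∀ n, Feasible T d p c h s β B0 R TL (Y n) (V n) := by
    intro n t h1 h2
    obtain ⟨a1, a2, a3, a4, a5, a6⟩ := hfeas0 n t h1 h2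
    refine ⟨?_, ?_, ?_, ?_, ?_, ?_⟩
    · rw [← hagY n t h1 h2]; exact a1
    · rw [← hagV n t h1 h2]; exact a2
    · rw [← hagV n t h1 h2]
      unfold EdSeq
      rw [← wSeq_congr d β (YV n).2 (V n) T (hagV n) (t-1) (by omega)]
      exact a3
    · rw [← ISeq_congr (YV n).1 (YV n).2 (Y n) (V n) T (hagY n) (hagV n) t h2]; exact a4
    · rw [← hagY n t h1 h2, ← hBeq n (t-1) (by omega)]; exact a5
    · rw [← hBeq n t h2]; exact a6
  have hval : ∀ n : ℕ, α - 1/((n:ℝ)+1) < BSeq p h s c R TL (Y n) (V n) 1 B0 T := by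
    intro n; rw [← hBeq n T le_rfl]; exact hval0 n
  -- the compact box
  set bY : Fin (T+1) → ℝ := fun i => M / c i with hbY
  set bV : Fin (T+1) → ℝ := fun i => d i with hbV
  set K : Set ((Fin (T+1) → ℝ) × (Fin (T+1) → ℝ)) :=
    (Set.Icc 0 bY) ×ˢ (Set.Icc 0 bV) with hKdef
  set x : ℕ → (Fin (T+1) → ℝ) × (Fin (T+1) → ℝ) :=
    fun n => (fun i => Y n i, fun i => V n i) with hx
  have hxK : ∀ n, x n ∈ K := by
    intro n
    refine Set.mem_prod.2 ⟨Set.mem_Icc.2 ⟨fun i => ?_, fun i => ?_⟩,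
      Set.mem_Icc.2 ⟨fun i => ?_, fun i => ?_⟩⟩
    · show (0:ℝ) ≤ Y n i
      by_cases hi : 1 ≤ (i:ℕ)
      · exact (hfeas n i hi (by omega)).1
      · simp [hY, hi]
    · show Y n i ≤ M / c i
      by_cases hi : 1 ≤ (i:ℕ)
      · exact y_le hc hd hp hh hs hβ0 hR (hfeas n) i hi (by omega)
      · have : Y n i = 0 := by simp [hY, hi]
        rw [this]
        exact div_nonneg hM0 (hc _).le
    · show (0:ℝ) ≤ V n i
      by_cases hi : 1 ≤ (i:ℕ)
      · exact (hfeas n i hi (by omega)).2.1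
      · simp [hV, hi]
    · show V n i ≤ d i
      by_cases hi : 1 ≤ (i:ℕ)
      · exact v_le_d hd hβ0 (hfeas n) i hi (by omega)
      · have : V n i = 0 := by simp [hV, hi]
        rw [this]; exact hd _
  -- pigeonhole on setup patterns
  set P : ℕ → (Fin (T+1) → Bool) := fun n i => decide (0 < Y n i) with hP
  obtain ⟨b, hbinf⟩ := Finite.exists_infinite_fiber P
  have hinf : {n | P n = b}.Infinite := Set.infinite_coe_iff.1 hbinf
  set ψ0 : ℕ → ℕ := Nat.nth (fun n => P n = b) with hψ0
  have hψ0mono : StrictMono ψ0 := Nat.nth_strictMono hinf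
  have hψ0b : ∀ n, P (ψ0 n) = b := fun n => Nat.nth_mem_of_infinite hinf n
  -- convergent subsequence
  have hKc : IsCompact K := (isCompact_Icc).prod (isCompact_Icc)
  obtain ⟨a, haK, φ, hφmono, hconv⟩ := hKc.isSeqCompact (x := fun n => x (ψ0 n))
    (fun n => hxK _)
  set ψ : ℕ → ℕ := fun n => ψ0 (φ n) with hψd
  have hψmono : StrictMono ψ := hψ0mono.comp hφmono
  have hψb : ∀ n, P (ψ n) = b := fun n => hψ0b (φ n)
  set ystar : ℕ → ℝ := fun t => if ht : t < T + 1 then a.1 ⟨t, ht⟩ else 0 with hystar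
  set vstar : ℕ → ℝ := fun t => if ht : t < T + 1 then a.2 ⟨t, ht⟩ else 0 with hvstar
  have hconv1 : Tendsto (fun n => (x (ψ n)).1) atTop (𝓝 a.1) :=
    (continuous_fst.tendsto a).comp hconv
  have hconv2 : Tendsto (fun n => (x (ψ n)).2) atTop (𝓝 a.2) :=
    (continuous_snd.tendsto a).comp hconv
  have hYt : ∀ t, Tendsto (fun n => Y (ψ n) t) atTop (𝓝 (ystar t)) := by
    intro t
    by_cases ht : t < T + 1
    · have h1 := tendsto_pi_nhds.1 hconv1 ⟨t, ht⟩
      have h2 : ystar t = a.1 ⟨t, ht⟩ := by rw [hystar]; simp [ht]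
      rw [h2]; exact h1
    · have h0 : (fun n => Y (ψ n) t) = fun _ => (0:ℝ) := by
        funext n; simp only [hY]; rw [if_neg (by omega)]
      have h2 : ystar t = 0 := by rw [hystar]; simp [ht]
      rw [h0, h2]; exact tendsto_const_nhds
  have hVt : ∀ t, Tendsto (fun n => V (ψ n) t) atTop (𝓝 (vstar t)) := by
    intro t
    by_cases ht : t < T + 1
    · have h1 := tendsto_pi_nhds.1 hconv2 ⟨t, ht⟩
      have h2 : vstar t = a.2 ⟨t, ht⟩ := by rw [hvstar]; simp [ht]
      rw [h2]; exact h1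
    · have h0 : (fun n => V (ψ n) t) = fun _ => (0:ℝ) := by
        funext n; simp only [hV]; rw [if_neg (by omega)]
      have h2 : vstar t = 0 := by rw [hvstar]; simp [ht]
      rw [h0, h2]; exact tendsto_const_nhds
  -- constant setup pattern
  set e : ℕ → ℝ := fun t => if ht : t < T + 1 then (if b ⟨t, ht⟩ then 1 else 0) else 0
    with hedef
  have hpat : ∀ n t, setupInd (Y (ψ n) t) = e t := by
    intro n t
    by_cases ht : t < T + 1
    · have hb : (b ⟨t, ht⟩ : Bool) = decide (0 < Y (ψ n) t) := by
        rw [← hψb n]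
      have h2 : e t = if (0 < Y (ψ n) t) then 1 else 0 := by
        rw [hedef]; simp only [dif_pos ht, hb]
        by_cases hpos : 0 < Y (ψ n) t
        · simp [hpos]
        · simp [hpos]
      rw [h2]; rfl
    · have h0 : Y (ψ n) t = 0 := by simp only [hY]; rw [if_neg (by omega)]
      rw [h0, setupInd_of_nonpos le_rfl, hedef]
      simp [ht]
  have he_nonneg : ∀ t, 0 ≤ e t := by
    intro t; rw [hedef]; dsimp only; split_ifs <;> norm_num
  have hestar : ∀ t, setupInd (ystar t) ≤ e t := by
    intro t
    by_cases hpos : 0 < ystar t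
    · obtain ⟨n, hn⟩ := ((hYt t).eventually (eventually_gt_nhds hpos)).exists
      have h1 : e t = 1 := by rw [← hpat n t, setupInd_of_pos hn]
      rw [h1, setupInd]; split <;> norm_num
    · rw [setupInd_of_nonpos (not_lt.1 hpos)]; exact he_nonneg t
  -- convergence of capital along the subsequence
  have hBA := BAux_tendsto p h s c R TL e B0 (fun n => Y (ψ n)) (fun n => V (ψ n))
    ystar vstar hYt hVt
  have hBeqA : ∀ n t, BSeq p h s c R TL (Y (ψ n)) (V (ψ n)) 1 B0 t
      = BAux p h s c R TL e (Y (ψ n)) (V (ψ n)) B0 t := by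
    intro n t
    have h1 : (fun j => setupInd (Y (ψ n) j)) = e := funext (hpat n)
    rw [BSeq_eq_BAux, h1]
  have hBt : ∀ t, Tendsto (fun n => BSeq p h s c R TL (Y (ψ n)) (V (ψ n)) 1 B0 t) atTop
      (𝓝 (BAux p h s c R TL e ystar vstar B0 t)) := by
    intro t
    have h1 : (fun n => BSeq p h s c R TL (Y (ψ n)) (V (ψ n)) 1 B0 t)
        = fun n => BAux p h s c R TL e (Y (ψ n)) (V (ψ n)) B0 t :=
      funext fun n => hBeqA n t
    rw [h1]; exact hBA t
  have hstar_ge : ∀ t, BAux p h s c R TL e ystar vstar B0 t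
      ≤ BSeq p h s c R TL ystar vstar 1 B0 t := by
    intro t
    rw [BSeq_eq_BAux]
    exact BAux_mono p h s c R TL hs (fun j => setupInd (ystar j)) e ystar vstar B0 hestar t
  -- the limit plan is feasible
  have hfstar : Feasible T d p c h s β B0 R TL ystar vstar := by
    intro t h1 h2
    have hIt := ISeq_tendsto (fun n => Y (ψ n)) (fun n => V (ψ n)) ystar vstar hYt hVt t
    have hwt := wSeq_tendsto d β (fun n => V (ψ n)) vstar hVt (t-1)
    have hEd : Tendsto (fun n => EdSeq d β (V (ψ n)) t) atTop (𝓝 (EdSeq d β vstar t)) := by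
      unfold EdSeq
      exact tendsto_const_nhds.max (tendsto_const_nhds.sub (hwt.const_mul β))
    refine ⟨?_, ?_, ?_, ?_, ?_, ?_⟩
    · exact le_of_tendsto_of_tendsto' tendsto_const_nhds (hYt t)
        fun n => (hfeas (ψ n) t h1 h2).1
    · exact le_of_tendsto_of_tendsto' tendsto_const_nhds (hVt t)
        fun n => (hfeas (ψ n) t h1 h2).2.1
    · exact le_of_tendsto_of_tendsto' (hVt t) hEd fun n => (hfeas (ψ n) t h1 h2).2.2.1
    · exact le_of_tendsto_of_tendsto' tendsto_const_nhds hIt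
        fun n => (hfeas (ψ n) t h1 h2).2.2.2.1
    · have hlim : Tendsto (fun n => s t * e t + c t * Y (ψ n) t) atTop
          (𝓝 (s t * e t + c t * ystar t)) :=
        tendsto_const_nhds.add ((hYt t).const_mul _)
      have hle : s t * e t + c t * ystar t ≤ BAux p h s c R TL e ystar vstar B0 (t-1) := by
        refine le_of_tendsto_of_tendsto' hlim (hBt (t-1)) fun n => ?_
        have h5 := (hfeas (ψ n) t h1 h2).2.2.2.2.1
        rw [hpat n t] at h5
        exact h5
      have h6 : s t * setupInd (ystar t) ≤ s t * e t :=
        mul_le_mul_of_nonneg_left (hestar t) (hs t)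
      have h7 := hstar_ge (t-1)
      linarith
    · have h8 := le_of_tendsto_of_tendsto' tendsto_const_nhds (hBt t)
        fun n => (hfeas (ψ n) t h1 h2).2.2.2.2.2
      linarith [hstar_ge t]
  -- optimality
  have hinv : Tendsto (fun n : ℕ => α - 1/((ψ n : ℝ)+1)) atTop (𝓝 α) := by
    have h0 : Tendsto (fun n : ℕ => 1/((ψ n : ℝ) + 1)) atTop (𝓝 0) := by
      refine squeeze_zero (fun n => by positivity) (fun n => ?_)
        tendsto_one_div_add_atTop_nhds_zero_nat
      have h1 : (n:ℝ) ≤ (ψ n : ℝ) := Nat.cast_le.2 (hψmono.le_apply)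
      apply one_div_le_one_div_of_le (by positivity)
      linarith
    have h1 : Tendsto (fun n : ℕ => α - 1/((ψ n : ℝ)+1)) atTop (𝓝 (α - 0)) :=
      tendsto_const_nhds.sub h0
    simpa using h1
  have hαle : α ≤ BAux p h s c R TL e ystar vstar B0 T :=
    le_of_tendsto_of_tendsto' hinv (hBt T) fun n => (hval (ψ n)).le
  refine ⟨ystar, vstar, hfstar, fun y v hf => ?_⟩
  have h1 : BSeq p h s c R TL y v 1 B0 T ≤ α :=
    le_csSup hVbdd (show _ ∈ Vals from ⟨y, v, hf, rfl⟩)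
  linarith [hstar_ge T]
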